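/- arXiv:1101.0784 — 2 statements merged into one kernel-verified Lean document; each statement's English description precedes it below -/
import Mathlib

section
/- Let μ_ε be a family of finite positive measures on ℝ converging weak-* to μ as ε ↓ 0, all supported in a fixed compact set, with μ({0}) = 0. Then ∫ 2·arctan(ε⁻¹α) dμ_ε(α) → ∫ π·sgn(α) dμ(α) as ε ↓ 0. -/
open MeasureTheory Filter

/-!
Replace `π · sgn` by the continuous ramp `π · signRamp δ`, which agrees with it off `(-δ, δ)`.
Pointwise, `|2 arctan (α / ε) - π · signRamp δ α|` is at most the tent `π (1 - |signRamp δ α|)`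
of width `δ` plus the uniform error `π - 2 arctan (δ / 2ε)`, which vanishes as `ε → 0`.
Since all measures live on one compact set, weak-* convergence holds against every continuous
function: the ramp, the tent and the constant `1`. As `δ → 0`, dominated convergence and
`μ₀ {0} = 0` send `∫ ramp dμ₀` to `∫ sgn dμ₀` and `∫ tent dμ₀` to `0`, and an `ε/3` argument
in the two parameters concludes.
-/

open Real Topology

theorem tendsto_of_eventually_abs_sub_le {ι κ : Type*} {l : Filter ι} {l' : Filter κ} [l'.NeBot]
    {a : ι → ℝ} {L : ℝ} {b e : κ → ι → ℝ} {B E : κ → ℝ}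
    (hb : ∀ᶠ k in l', Tendsto (b k) l (𝓝 (B k))) (hB : Tendsto B l' (𝓝 L))
    (he : ∀ᶠ k in l', Tendsto (e k) l (𝓝 (E k))) (hE : Tendsto E l' (𝓝 0))
    (hab : ∀ᶠ k in l', ∀ᶠ i in l, |a i - b k i| ≤ e k i) :
    Tendsto a l (𝓝 L) := by
  rw [Metric.tendsto_nhds]
  intro η hη
  have hη3 : 0 < η / 3 := by positivity
  obtain ⟨k, hbk, hBk, hek, hEk, habk⟩ :=
    (hb.and <| (hB.eventually (Metric.ball_mem_nhds L hη3)).and <|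
      he.and <| (hE.eventually (gt_mem_nhds hη3)).and hab).exists
  filter_upwards [habk, hbk.eventually (Metric.ball_mem_nhds _ hη3),
    hek.eventually (gt_mem_nhds hEk)] with i hai hbi hei
  rw [Real.dist_eq] at hbi hBk ⊢
  linarith [abs_sub_le (a i) (b k i) L, abs_sub_le (b k i) (B k) L]

theorem tendsto_integral_of_forall_hasCompactSupport {X ι : Type*} [TopologicalSpace X]
    [RegularSpace X] [LocallyCompactSpace X] [MeasurableSpace X] {l : Filter ι}
    {μ : ι → Measure X} {μ₀ : Measure X} {S : Set X} (hS : IsCompact S)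
    (hsupp : ∀ᶠ i in l, μ i Sᶜ = 0) (hsupp₀ : μ₀ Sᶜ = 0)
    (hweak : ∀ f : X → ℝ, Continuous f → HasCompactSupport f →
      Tendsto (fun i => ∫ x, f x ∂μ i) l (𝓝 (∫ x, f x ∂μ₀)))
    {f : X → ℝ} (hf : Continuous f) :
    Tendsto (fun i => ∫ x, f x ∂μ i) l (𝓝 (∫ x, f x ∂μ₀)) := by
  obtain ⟨χ, hχS, -, hχ, -⟩ :=
    exists_continuous_one_zero_of_isCompact hS isClosed_empty (Set.disjoint_empty S)
  have hcut : ∀ ν : Measure X, ν Sᶜ = 0 → ∫ x, f x ∂ν = ∫ x, f x * χ x ∂ν := fun ν hν =>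
    integral_congr_ae <| by
      filter_upwards [mem_ae_iff.2 hν] with x hx
      simp [hχS hx]
  rw [hcut μ₀ hsupp₀]
  refine (hweak _ (hf.mul χ.continuous) hχ.mul_left).congr' ?_
  filter_upwards [hsupp] with i hi using (hcut _ hi).symm

theorem Continuous.integrable_of_measure_compl_eq_zero {X : Type*} [TopologicalSpace X]
    [T2Space X] [MeasurableSpace X] [OpensMeasurableSpace X] {μ : Measure X}
    [IsFiniteMeasureOnCompacts μ] {S : Set X} (hS : IsCompact S) (hμ : μ Sᶜ = 0) {f : X → ℝ}
    (hf : Continuous f) : Integrable f μ := by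
  rw [← Measure.restrict_eq_self_of_ae_mem (mem_ae_iff.2 hμ)]
  exact hf.continuousOn.integrableOn_compact hS

theorem abs_integral_sub_integral_le {α : Type*} [MeasurableSpace α] {μ : Measure α}
    [IsFiniteMeasure μ] {f g h : α → ℝ} (hf : Integrable f μ) (hg : Integrable g μ)
    (hh : Integrable h μ) (K : ℝ) (hle : ∀ x, |f x - g x| ≤ h x + K) :
    |∫ x, f x ∂μ - ∫ x, g x ∂μ| ≤ ∫ x, h x ∂μ + K * μ.real Set.univ := by
  rw [← integral_sub hf hg]
  calc |∫ x, f x - g x ∂μ| ≤ ∫ x, |f x - g x| ∂μ := abs_integral_le_integral_abs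
    _ ≤ ∫ x, h x + K ∂μ := integral_mono (hf.sub hg).abs (hh.add (integrable_const K)) hle
    _ = ∫ x, h x ∂μ + K * μ.real Set.univ := by
      rw [integral_add hh (integrable_const K), integral_const, smul_eq_mul, mul_comm]

theorem tendsto_pi_sub_two_arctan_inv_mul_nhdsGT {c : ℝ} (hc : 0 < c) :
    Tendsto (fun ε => π - 2 * arctan (ε⁻¹ * c)) (𝓝[>] 0) (𝓝 0) := by
  have h := ((tendsto_arctan_atTop.mono_right nhdsWithin_le_nhds).comp
    (tendsto_inv_nhdsGT_zero.atTop_mul_const' hc)).const_mul 2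
  rw [mul_div_cancel₀ π two_ne_zero] at h
  simpa using (tendsto_const_nhds (x := π)).sub h

noncomputable def signRamp (δ x : ℝ) : ℝ := max (-1) (min 1 (x / δ))

@[fun_prop]
theorem continuous_signRamp (δ : ℝ) : Continuous (signRamp δ) := by
  unfold signRamp; fun_prop

theorem abs_signRamp_le_one (δ x : ℝ) : |signRamp δ x| ≤ 1 :=
  abs_le.2 ⟨le_max_left _ _, max_le (by norm_num) (min_le_left _ _)⟩

theorem signRamp_neg (δ x : ℝ) : signRamp δ (-x) = -signRamp δ x := by
  simp only [signRamp, neg_div]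
  grind

theorem signRamp_of_abs_lt {δ x : ℝ} (hδ : 0 < δ) (hx : |x| < δ) : signRamp δ x = x / δ := by
  have h : |x / δ| < 1 := by rw [abs_div, abs_of_pos hδ]; exact (div_lt_one hδ).2 hx
  rw [signRamp, min_eq_right (abs_lt.1 h).2.le, max_eq_right (abs_lt.1 h).1.le]

theorem signRamp_of_le_abs {δ x : ℝ} (hδ : 0 < δ) (hx : δ ≤ |x|) :
    signRamp δ x = Real.sign x := by
  rcases le_abs'.1 hx with hx | hx
  · have : x / δ ≤ -1 := by rw [div_le_iff₀ hδ]; linarith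
    rw [Real.sign_of_neg (by linarith), signRamp, min_eq_right (by linarith), max_eq_left this]
  · have : 1 ≤ x / δ := by rw [le_div_iff₀ hδ]; linarith
    rw [Real.sign_of_pos (by linarith), signRamp, min_eq_left this, max_eq_right (by norm_num)]

theorem tendsto_signRamp_nhdsGT {x : ℝ} (hx : x ≠ 0) :
    Tendsto (fun δ => signRamp δ x) (𝓝[>] 0) (𝓝 (Real.sign x)) := by
  refine tendsto_const_nhds.congr' ?_
  filter_upwards [Ioo_mem_nhdsGT (abs_pos.2 hx)] with δ hδ
  exact (signRamp_of_le_abs hδ.1 hδ.2.le).symm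

theorem abs_two_arctan_sub_pi_mul_signRamp_le_of_nonneg {δ t x : ℝ} (hδ : 0 < δ) (ht : 0 ≤ t)
    (hx : 0 ≤ x) :
    |2 * arctan (t * x) - π * signRamp δ x| ≤
      π * (1 - |signRamp δ x|) + (π - 2 * arctan (t * (δ / 2))) := by
  have hlt := arctan_lt_pi_div_two (t * x)
  have hpos : 0 ≤ arctan (t * x) := arctan_nonneg.2 (mul_nonneg ht hx)
  have hhalf := arctan_lt_pi_div_two (t * (δ / 2))
  rcases le_or_gt δ x with hδx | hxδ
  · have hmono : arctan (t * (δ / 2)) ≤ arctan (t * x) :=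
      arctan_strictMono.monotone (mul_le_mul_of_nonneg_left (by linarith : δ / 2 ≤ x) ht)
    rw [signRamp_of_le_abs hδ (by rwa [abs_of_nonneg hx]), Real.sign_of_pos (by linarith),
      abs_one, sub_self, mul_zero, zero_add, mul_one, abs_le]
    constructor <;> linarith
  have hc1 : x / δ < 1 := (div_lt_one hδ).2 hxδ
  rw [signRamp_of_abs_lt hδ (by rwa [abs_of_nonneg hx]), abs_of_nonneg (div_nonneg hx hδ.le),
    abs_sub_le_iff]
  constructor
  · nlinarith [pi_pos]
  -- Below `δ / 2` the ramp is at most `1 / 2`; above it `2 arctan (t x)` is already close to `π`.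
  rcases le_or_gt x (δ / 2) with hx2 | hx2
  · have : x / δ ≤ 1 / 2 := by rw [div_le_iff₀ hδ]; linarith
    nlinarith [pi_pos]
  · have hmono : arctan (t * (δ / 2)) ≤ arctan (t * x) := arctan_strictMono.monotone (by gcongr)
    nlinarith [pi_pos]

theorem abs_two_arctan_sub_pi_mul_signRamp_le {δ t : ℝ} (hδ : 0 < δ) (ht : 0 ≤ t) (x : ℝ) :
    |2 * arctan (t * x) - π * signRamp δ x| ≤
      π * (1 - |signRamp δ x|) + (π - 2 * arctan (t * (δ / 2))) := by
  rcases le_total 0 x with hx | hx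
  · exact abs_two_arctan_sub_pi_mul_signRamp_le_of_nonneg hδ ht hx
  calc |2 * arctan (t * x) - π * signRamp δ x|
      = |2 * arctan (t * -x) - π * signRamp δ (-x)| := by
        rw [mul_neg, arctan_neg, signRamp_neg, ← abs_neg]; ring_nf
    _ ≤ π * (1 - |signRamp δ (-x)|) + (π - 2 * arctan (t * (δ / 2))) :=
        abs_two_arctan_sub_pi_mul_signRamp_le_of_nonneg hδ ht (neg_nonneg.2 hx)
    _ = π * (1 - |signRamp δ x|) + (π - 2 * arctan (t * (δ / 2))) := by
        rw [signRamp_neg, abs_neg]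

section Integral

variable {μ : Measure ℝ} [IsFiniteMeasure μ]

theorem tendsto_integral_signRamp (h0 : μ {0} = 0) :
    Tendsto (fun δ => ∫ x, signRamp δ x ∂μ) (𝓝[>] 0) (𝓝 (∫ x, Real.sign x ∂μ)) := by
  refine tendsto_integral_filter_of_dominated_convergence (fun _ => 1)
    (Eventually.of_forall fun δ => (continuous_signRamp δ).aestronglyMeasurable)
    (Eventually.of_forall fun δ => Eventually.of_forall fun x => abs_signRamp_le_one δ x)
    (integrable_const 1) ?_
  filter_upwards [compl_mem_ae_iff.2 h0] with x hx using tendsto_signRamp_nhdsGT hx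

theorem tendsto_integral_one_sub_abs_signRamp (h0 : μ {0} = 0) :
    Tendsto (fun δ => ∫ x, (1 - |signRamp δ x|) ∂μ) (𝓝[>] 0) (𝓝 0) := by
  have h := tendsto_integral_filter_of_dominated_convergence (μ := μ) (l := 𝓝[>] 0)
    (F := fun δ x => 1 - |signRamp δ x|) (f := fun _ => 0) (fun _ => 1)
    (Eventually.of_forall fun δ => (by fun_prop : Continuous _).aestronglyMeasurable)
    (Eventually.of_forall fun δ => Eventually.of_forall fun x => by
      rw [Real.norm_eq_abs, abs_le]
      constructor <;> linarith [abs_nonneg (signRamp δ x), abs_signRamp_le_one δ x])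
    (integrable_const 1) ?_
  · simpa using h
  filter_upwards [compl_mem_ae_iff.2 h0] with x hx
  have hsign : |Real.sign x| = 1 := by
    rcases Real.sign_apply_eq_of_ne_zero x hx with h | h <;> simp [h]
  simpa [hsign] using (tendsto_signRamp_nhdsGT hx).abs.const_sub 1

end Integral

/-- Let `μ ε` be finite positive measures on `ℝ`, all supported in a fixed compact set
`S`, converging weak-* as `ε ↓ 0` to a finite measure `μ₀` with `μ₀({0}) = 0`.  Then
`∫ 2·arctan(ε⁻¹α) dμ_ε(α) → ∫ π·sgn(α) dμ₀(α)`. -/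
theorem integral_arctan_tendsto_integral_sign
    (μ : ℝ → Measure ℝ) (μ₀ : Measure ℝ) [IsFiniteMeasure μ₀]
    (S : Set ℝ) (hS : IsCompact S)
    (hfin : ∀ ε ∈ Set.Ioi (0:ℝ), μ ε Set.univ ≠ ⊤)
    (hsupp : ∀ ε ∈ Set.Ioi (0:ℝ), μ ε Sᶜ = 0) (hsupp₀ : μ₀ Sᶜ = 0)
    (hweak : ∀ f : ℝ → ℝ, Continuous f → HasCompactSupport f →
      Tendsto (fun ε => ∫ α, f α ∂(μ ε)) (nhdsWithin 0 (Set.Ioi 0))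
        (nhds (∫ α, f α ∂μ₀)))
    (hzero : μ₀ {0} = 0) :
    Tendsto (fun ε : ℝ => ∫ α, 2 * Real.arctan (ε⁻¹ * α) ∂(μ ε))
      (nhdsWithin 0 (Set.Ioi 0))
      (nhds (∫ α, Real.pi * Real.sign α ∂μ₀)) := by
  have hlim {f : ℝ → ℝ} (hf : Continuous f) :=
    tendsto_integral_of_forall_hasCompactSupport hS (eventually_nhdsWithin_of_forall hsupp)
      hsupp₀ hweak hf
  have hmass : Tendsto (fun ε => (μ ε).real Set.univ) (𝓝[>] 0) (𝓝 (μ₀.real Set.univ)) := by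
    simpa using hlim (f := fun _ => (1 : ℝ)) continuous_const
  rw [integral_const_mul π]
  refine tendsto_of_eventually_abs_sub_le (l' := 𝓝[>] 0)
    (b := fun δ ε => π * ∫ α, signRamp δ α ∂μ ε)
    (E := fun δ => π * ∫ α, (1 - |signRamp δ α|) ∂μ₀ + 0 * μ₀.real Set.univ)
    (e := fun δ ε => π * ∫ α, (1 - |signRamp δ α|) ∂μ ε +
      (π - 2 * arctan (ε⁻¹ * (δ / 2))) * (μ ε).real Set.univ)
    (Eventually.of_forall fun δ => (hlim (continuous_signRamp δ)).const_mul π)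
    ((tendsto_integral_signRamp hzero).const_mul π) ?_ ?_ ?_
  · filter_upwards [self_mem_nhdsWithin] with δ (hδ : 0 < δ)
    exact ((hlim (by fun_prop)).const_mul π).add
      ((tendsto_pi_sub_two_arctan_inv_mul_nhdsGT (half_pos hδ)).mul hmass)
  · simpa only [zero_mul, add_zero, mul_zero] using
      (tendsto_integral_one_sub_abs_signRamp hzero).const_mul π
  filter_upwards [self_mem_nhdsWithin] with δ (hδ : 0 < δ)
  filter_upwards [self_mem_nhdsWithin] with ε (hε : 0 < ε)
  have : IsFiniteMeasure (μ ε) := ⟨(hfin ε hε).lt_top⟩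
  have hint {f : ℝ → ℝ} (hf : Continuous f) : Integrable f (μ ε) :=
    hf.integrable_of_measure_compl_eq_zero hS (hsupp ε hε)
  rw [← integral_const_mul, ← integral_const_mul]
  exact abs_integral_sub_integral_le (hint (by fun_prop)) (hint (by fun_prop))
    (hint (by fun_prop)) _ (abs_two_arctan_sub_pi_mul_signRamp_le hδ (inv_nonneg.2 hε.le))
end

section
/- Let u₀: ℝ → ℝ be C¹ with bounded derivative, and fix real times t₁,…,t_K. If Σ_{k=1}^{K} (k+1)|t_k| · k · M^{k-1} · ‖u₀'‖_∞ < 1 where M bounds |u_B| ≤ M on the relevant range, then for each x ∈ ℝ the implicit equation u = u₀(x - Σ_{k=1}^K (k+1) u^k t_k) has exactly one solution u with |u| ≤ M. -/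
/-!
Writing `S u = ∑ (i + 2) t_i u^(i+1)`, the solutions are the fixed points of
`g u = u₀ (x - S u)`. Since `|u₀| ≤ M`, `g` maps `[-M, M]` into itself, so it has a fixed point
there by the intermediate value theorem; on `[-M, M]` the chain rule bounds `|g'|` by the
contraction constant, so by the mean value theorem `g` is a contraction there and the fixed
point is unique.
-/

open Set Finset Function NNReal

theorem LipschitzOnWith.eq_of_isFixedPt {α : Type*} [MetricSpace α] {f : α → α} {K : ℝ≥0}
    {s : Set α} (hf : LipschitzOnWith K f s) (hK : K < 1) {x y : α} (hx : x ∈ s) (hy : y ∈ s)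
    (hfx : IsFixedPt f x) (hfy : IsFixedPt f y) : x = y := by
  have hxy : dist x y ≤ K * dist x y := by
    simpa only [hfx.eq, hfy.eq] using hf.dist_le_mul x hx y hy
  have : dist x y * (1 - K) ≤ 0 := by linarith
  exact dist_le_zero.1 (nonpos_of_mul_nonpos_left this (by simpa using hK))

theorem LipschitzOnWith.existsUnique_isFixedPt_Icc {g : ℝ → ℝ} {K : ℝ≥0} {a b : ℝ}
    (hg : LipschitzOnWith K g (Icc a b)) (hK : K < 1) (hab : a ≤ b)
    (hmaps : MapsTo g (Icc a b) (Icc a b)) : ∃! c, c ∈ Icc a b ∧ IsFixedPt g c := by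
  obtain ⟨c, hc, hfix⟩ := exists_mem_Icc_isFixedPt_of_mapsTo hg.continuousOn hab hmaps
  exact ⟨c, ⟨hc, hfix⟩, fun d ⟨hd, hdfix⟩ => hg.eq_of_isFixedPt hK hd hc hdfix hfix⟩

section PowerSum

variable (c : ℕ → ℝ) (K : ℕ)

theorem hasDerivAt_sum_mul_pow_succ (u : ℝ) :
    HasDerivAt (fun u => ∑ i ∈ range K, c i * u ^ (i + 1))
      (∑ i ∈ range K, c i * ((i + 1) * u ^ i)) u := by
  refine HasDerivAt.fun_sum fun i _ => ?_
  simpa using (hasDerivAt_pow (i + 1) u).const_mul (c i)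

theorem abs_sum_mul_pow_le {M u : ℝ} (hu : |u| ≤ M) :
    |∑ i ∈ range K, c i * ((i + 1) * u ^ i)| ≤ ∑ i ∈ range K, |c i| * ((i + 1) * M ^ i) := by
  refine (abs_sum_le_sum_abs _ _).trans (sum_le_sum fun i _ => ?_)
  rw [abs_mul, abs_mul, abs_pow, abs_of_nonneg (by positivity : (0 : ℝ) ≤ i + 1)]
  gcongr

theorem lipschitzOnWith_comp_sub_sum_mul_pow {u₀ u₀' : ℝ → ℝ} {B M : ℝ}
    (hderiv : ∀ x, HasDerivAt u₀ (u₀' x) x) (hB : ∀ x, |u₀' x| ≤ B) (x : ℝ) :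
    LipschitzOnWith ((∑ i ∈ range K, |c i| * ((i + 1) * M ^ i)) * B).toNNReal
      (fun u => u₀ (x - ∑ i ∈ range K, c i * u ^ (i + 1))) (Icc (-M) M) := by
  refine (convex_Icc _ _).lipschitzOnWith_of_nnnorm_hasDerivWithin_le
    (fun u _ => ((hderiv _).comp u ((hasDerivAt_sum_mul_pow_succ c K u).const_sub x))
      |>.hasDerivWithinAt) fun u hu => NNReal.le_toNNReal_of_coe_le ?_
  rw [coe_nnnorm, Real.norm_eq_abs, abs_mul, abs_neg, mul_comm]
  exact mul_le_mul (abs_sum_mul_pow_le c K (abs_le.2 hu)) (hB _) (abs_nonneg _)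
    ((abs_nonneg _).trans (abs_sum_mul_pow_le c K (abs_le.2 hu)))

end PowerSum

/-- Pre-breaking uniqueness for the implicit solution of the inviscid Burgers
hierarchy.  If `u₀` is `C¹` with `|u₀'| ≤ B`, `|u₀| ≤ M`, and the contraction
condition `(Σ_{k=1}^K (k+1)|t_k|·k·M^{k-1})·B < 1` holds (index `i = k-1`), then for
each `x` the equation `u = u₀(x - Σ_{k=1}^K (k+1)u^k t_k)` has exactly one solution
with `|u| ≤ M`. -/
theorem burgers_implicit_unique_solution
    (K : ℕ) (u₀ u₀' : ℝ → ℝ) (t : ℕ → ℝ) (M B : ℝ)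
    (hderiv : ∀ x, HasDerivAt u₀ (u₀' x) x)
    (hB : ∀ x, |u₀' x| ≤ B)
    (hM : ∀ x, |u₀ x| ≤ M)
    (hcontr : (∑ i ∈ Finset.range K, ((i:ℝ) + 2) * |t i| * ((i:ℝ) + 1) * M ^ i) * B < 1) :
    ∀ x : ℝ, ∃! u : ℝ, |u| ≤ M ∧
      u = u₀ (x - ∑ i ∈ Finset.range K, ((i:ℝ) + 2) * u ^ (i + 1) * t i) := by
  intro x
  set c : ℕ → ℝ := fun i => (i + 2) * t i
  have hshift (u : ℝ) : ∑ i ∈ range K, ((i : ℝ) + 2) * u ^ (i + 1) * t i =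
      ∑ i ∈ range K, c i * u ^ (i + 1) := sum_congr rfl fun i _ => by ring
  have hconst : ∑ i ∈ range K, ((i : ℝ) + 2) * |t i| * ((i : ℝ) + 1) * M ^ i =
      ∑ i ∈ range K, |c i| * ((i + 1) * M ^ i) := sum_congr rfl fun i _ => by
    rw [abs_mul, abs_of_nonneg (by positivity : (0 : ℝ) ≤ i + 2)]; ring
  have hM0 : -M ≤ M := by linarith [abs_nonneg (u₀ 0), hM 0]
  have hmaps : MapsTo (fun u => u₀ (x - ∑ i ∈ range K, c i * u ^ (i + 1))) (Icc (-M) M)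
      (Icc (-M) M) := fun _ _ => abs_le.1 (hM _)
  rw [hconst] at hcontr
  refine (existsUnique_congr fun u => ?_).1
    ((lipschitzOnWith_comp_sub_sum_mul_pow c K hderiv hB x).existsUnique_isFixedPt_Icc
      (Real.toNNReal_lt_one.2 hcontr) hM0 hmaps)
  rw [Set.mem_Icc, ← abs_le, hshift, IsFixedPt, eq_comm]
end
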